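/- Let p be a prime, a ≥ 1, and suppose m is the least positive integer x with τ_{p^a,x} = 2p^a. Then m is a power of p, say m = p^b with b ≥ a, and the sequence n ↦ τ_{p^a,n} is periodic with period m. -/

import Mathlib

/-- A line on the discrete torus `ZMod m × ZMod n`: the image of an integer line
`{A + k•(u,v) : k ∈ ℤ}` with `gcd(u,v) = 1`. -/
def torusLine (m n : ℕ) (L : Set (ZMod m × ZMod n)) : Prop :=
  ∃ (A : ZMod m × ZMod n) (u v : ℤ), Int.gcd u v = 1 ∧
    L = {P | ∃ k : ℤ, P = (A.1 + ((k * u : ℤ) : ZMod m), A.2 + ((k * v : ℤ) : ZMod n))}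

/-- Three points of the torus are collinear if some line contains all three. -/
def torusCollinear (m n : ℕ) (P Q R : ZMod m × ZMod n) : Prop :=
  ∃ L, torusLine m n L ∧ P ∈ L ∧ Q ∈ L ∧ R ∈ L

/-- No three (distinct) points of `S` lie on a common line. -/
def noThreeInLine (m n : ℕ) (S : Set (ZMod m × ZMod n)) : Prop :=
  ∀ P ∈ S, ∀ Q ∈ S, ∀ R ∈ S, P ≠ Q → P ≠ R → Q ≠ R → ¬ torusCollinear m n P Q R

/-- `tau m n`: maximal number of points on the torus with no three collinear. -/
noncomputable def tau (m n : ℕ) : ℕ :=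
  sSup {k | ∃ S : Finset (ZMod m × ZMod n), noThreeInLine m n ↑S ∧ S.card = k}

/-!
Two points of `T_{m,n}` with the same image under `(x, y) ↦ x - y mod gcd(m, n)` differ by a
multiple of `(1, 1)`, so a set with no three collinear meets each such fibre at most twice:
`τ_{m,n} ≤ 2 gcd(m, n)`. The heart of the matter is that a factor `q` of `n` coprime to `m n`
does not change `τ`: every line of `T_{m,n}` lifts to a line of `T_{m,nq}` containing its whole
preimage (lift the direction to a coprime pair `(u', v')` with `v' ≡ 1 mod q`, and choose the
parameter by the Chinese remainder theorem). So the projection `T_{m,nq} → T_{m,n}` reflects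
collinearity and, as any two points lie on a line, is injective on sets of at least three points
with no three collinear. Hence `τ_{p^a,n}` depends only on the `p`-part of `n`, the least `m`
with `τ_{p^a,m} = 2p^a` is a power `p^b`, and `n`, `n + p^b` are either both multiples of `p^b`
or have the same `p`-part.
-/

theorem ZMod.exists_natCast_eq_of_castHom_eq {m n : ℕ} [NeZero m] [NeZero n]
    {x : ZMod m} {y : ZMod n}
    (h : ZMod.castHom (Nat.gcd_dvd_left m n) (ZMod (m.gcd n)) x =
      ZMod.castHom (Nat.gcd_dvd_right m n) (ZMod (m.gcd n)) y) :
    ∃ k : ℕ, (k : ZMod m) = x ∧ (k : ZMod n) = y := by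
  have hval : x.val ≡ y.val [MOD m.gcd n] := by
    rwa [← ZMod.natCast_eq_natCast_iff, ZMod.natCast_val, ZMod.natCast_val]
  obtain ⟨k, hkx, hky⟩ := Nat.chineseRemainder' hval
  refine ⟨k, ?_, ?_⟩
  · rw [(ZMod.natCast_eq_natCast_iff _ _ _).2 hkx, ZMod.natCast_zmod_val]
  · rw [(ZMod.natCast_eq_natCast_iff _ _ _).2 hky, ZMod.natCast_zmod_val]

theorem ZMod.exists_natCast_eq_of_coprime {m n : ℕ} [NeZero m] [NeZero n] (h : m.Coprime n)
    (x : ZMod m) (y : ZMod n) : ∃ k : ℕ, (k : ZMod m) = x ∧ (k : ZMod n) = y :=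
  have : Subsingleton (ZMod (m.gcd n)) := by rw [h.gcd_eq_one]; infer_instance
  exists_natCast_eq_of_castHom_eq (Subsingleton.elim _ _)

theorem ZMod.eq_of_castHom_eq_of_coprime {n q : ℕ} (h : n.Coprime q) {x y : ZMod (n * q)}
    (hn : ZMod.castHom (dvd_mul_right n q) (ZMod n) x = ZMod.castHom (dvd_mul_right n q) (ZMod n) y)
    (hq : ZMod.castHom (dvd_mul_left q n) (ZMod q) x = ZMod.castHom (dvd_mul_left q n) (ZMod q) y) :
    x = y := by
  apply (ZMod.chineseRemainder h).injective
  simp only [ZMod.castHom_apply] at hn hq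
  simp only [ZMod.chineseRemainder, RingEquiv.coe_mk, Equiv.coe_fn_mk, ZMod.castHom_apply]
  ext
  · simpa [Prod.fst_zmod_cast] using hn
  · simpa [Prod.snd_zmod_cast] using hq

theorem Int.exists_gcd_add_mul_eq_one {a b L : ℤ} (ha : a ≠ 0)
    (h : ∀ r : ℕ, r.Prime → (r : ℤ) ∣ a → (r : ℤ) ∣ L → ¬ (r : ℤ) ∣ b) :
    ∃ k : ℤ, Int.gcd a (b + k * L) = 1 := by
  classical
  -- every prime factor of `a` then divides exactly one of `b` and `k * L`
  set k : ℕ := ∏ r ∈ a.natAbs.primeFactors with ¬ ((r : ℕ) : ℤ) ∣ b, r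
  have hk : ∀ r : ℕ, r.Prime → (r : ℤ) ∣ a → ((r : ℤ) ∣ k ↔ ¬ (r : ℤ) ∣ b) := by
    intro r hr hra
    rw [Int.natCast_dvd_natCast]
    constructor
    · intro hrk
      obtain ⟨s, hs, hrs⟩ := (Nat.prime_iff.1 hr).exists_mem_finset_dvd hrk
      rw [Finset.mem_filter, Nat.mem_primeFactors] at hs
      rw [(Nat.prime_dvd_prime_iff_eq hr hs.1.1).1 hrs]
      exact hs.2
    · intro hrb
      refine Finset.dvd_prod_of_mem _ (Finset.mem_filter.2 ⟨?_, hrb⟩)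
      exact Nat.mem_primeFactors.2 ⟨hr, Int.natCast_dvd.1 hra, Int.natAbs_ne_zero.2 ha⟩
  refine ⟨k, Nat.coprime_of_dvd fun r hr hra hrb => ?_⟩
  rw [← Int.natCast_dvd] at hra hrb
  have hprime : Prime (r : ℤ) := Nat.prime_iff_prime_int.1 hr
  by_cases hb : (r : ℤ) ∣ b
  · rcases hprime.dvd_or_dvd ((dvd_add_right hb).1 hrb) with hrk | hrL
    · exact (hk r hr hra).1 hrk hb
    · exact h r hr hra hrL hb
  · exact hb ((dvd_add_left (((hk r hr hra).2 hb).mul_right L)).1 hrb)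

theorem exists_coprime_lift {N q : ℕ} [NeZero N] [NeZero q] (hNq : N.Coprime q) {u v : ℤ}
    (huv : Int.gcd u v = 1) :
    ∃ u' v' : ℤ, Int.gcd u' v' = 1 ∧ (u' : ZMod N) = u ∧ (v' : ZMod N) = v ∧ (v' : ZMod q) = 1 := by
  obtain ⟨k, hkN, hkq⟩ := ZMod.exists_natCast_eq_of_coprime hNq (v : ZMod N) 1
  -- adding `N * q` keeps the residues and makes `v'` nonzero
  set v' : ℤ := k + N * q
  have hvN : (v' : ZMod N) = v := by simp [v', hkN]
  have hvq : (v' : ZMod q) = 1 := by simp [v', hkq]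
  have hv0 : v' ≠ 0 := by
    have : 0 < N * q := Nat.pos_of_ne_zero (mul_ne_zero (NeZero.ne N) (NeZero.ne q))
    omega
  have hprimes : ∀ r : ℕ, r.Prime → (r : ℤ) ∣ v' → (r : ℤ) ∣ (N * q : ℕ) → ¬ (r : ℤ) ∣ u := by
    intro r hr hrv hrNq hru
    have hr_unit : ¬ IsUnit (r : ℤ) := (Nat.prime_iff_prime_int.1 hr).not_isUnit
    rcases (Nat.Prime.dvd_mul hr).1 (Int.natCast_dvd_natCast.1 hrNq) with hrN | hrq
    · have hrv' : (r : ℤ) ∣ v :=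
        (dvd_sub_left hrv).1 ((Int.natCast_dvd_natCast.2 hrN).trans
          ((ZMod.intCast_eq_intCast_iff_dvd_sub _ _ _).1 hvN))
      exact hr_unit ((Int.isCoprime_iff_gcd_eq_one.2 huv).isUnit_of_dvd' hru hrv')
    · have h1 : (q : ℤ) ∣ 1 - v' :=
        (ZMod.intCast_eq_intCast_iff_dvd_sub _ _ _).1 (by simpa using hvq)
      exact hr_unit (isUnit_of_dvd_one
        ((dvd_sub_left hrv).1 ((Int.natCast_dvd_natCast.2 hrq).trans h1)))
  obtain ⟨j, hj⟩ := Int.exists_gcd_add_mul_eq_one hv0 hprimes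
  refine ⟨u + j * (N * q : ℕ), v', by rwa [Int.gcd_comm], by simp, hvN, hvq⟩

theorem exists_torusLine_mem_mem {m n : ℕ} [NeZero m] [NeZero n] (P R : ZMod m × ZMod n) :
    ∃ L, torusLine m n L ∧ P ∈ L ∧ R ∈ L := by
  obtain ⟨u, v, huv, hu, hv⟩ := Nat.exists_coprime (R - P).1.val (R - P).2.val
  refine ⟨_, ⟨P, u, v, by simpa using huv, rfl⟩, ⟨0, by simp⟩,
    ⟨Nat.gcd (R - P).1.val (R - P).2.val, ?_⟩⟩
  push_cast
  rw [mul_comm, ← Nat.cast_mul, ← hu, mul_comm, ← Nat.cast_mul, ← hv, ZMod.natCast_zmod_val,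
    ZMod.natCast_zmod_val]
  simp

def diagResidue (m n : ℕ) (X : ZMod m × ZMod n) : ZMod (m.gcd n) :=
  ZMod.castHom (Nat.gcd_dvd_left m n) _ X.1 - ZMod.castHom (Nat.gcd_dvd_right m n) _ X.2

theorem torusCollinear_of_diagResidue_eq {m n : ℕ} [NeZero m] [NeZero n] {P Q R : ZMod m × ZMod n}
    (hQ : diagResidue m n Q = diagResidue m n P) (hR : diagResidue m n R = diagResidue m n P) :
    torusCollinear m n P Q R := by
  have mem : ∀ X, diagResidue m n X = diagResidue m n P →
      ∃ k : ℤ, X = (P.1 + ((k * 1 : ℤ) : ZMod m), P.2 + ((k * 1 : ℤ) : ZMod n)) := by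
    intro X hX
    obtain ⟨k, h1, h2⟩ := ZMod.exists_natCast_eq_of_castHom_eq (x := X.1 - P.1) (y := X.2 - P.2)
      (by simp only [diagResidue, map_sub] at hX ⊢; linear_combination hX)
    exact ⟨k, by simp [h1, h2]⟩
  exact ⟨_, ⟨P, 1, 1, by simp, rfl⟩, ⟨0, by simp⟩, mem Q hQ, mem R hR⟩

def torusProj (m : ℕ) {n d : ℕ} (h : d ∣ n) (X : ZMod m × ZMod n) : ZMod m × ZMod d :=
  (X.1, ZMod.castHom h (ZMod d) X.2)

theorem torusCollinear.map_torusProj {m n d : ℕ} (hd : d ∣ n) {P Q R : ZMod m × ZMod n}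
    (h : torusCollinear m n P Q R) :
    torusCollinear m d (torusProj m hd P) (torusProj m hd Q) (torusProj m hd R) := by
  obtain ⟨L, ⟨A, u, v, huv, rfl⟩, ⟨kP, rfl⟩, ⟨kQ, rfl⟩, ⟨kR, rfl⟩⟩ := h
  refine ⟨_, ⟨torusProj m hd A, u, v, huv, rfl⟩, ⟨kP, ?_⟩, ⟨kQ, ?_⟩, ⟨kR, ?_⟩⟩ <;>
    simp only [torusProj, map_add, map_intCast]

theorem exists_torusLine_forall_torusProj_mem {m n q : ℕ} [NeZero m] [NeZero n] [NeZero q]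
    (hq : (m * n).Coprime q) {L : Set (ZMod m × ZMod n)} (hL : torusLine m n L) :
    ∃ L', torusLine m (n * q) L' ∧ ∀ X, torusProj m (dvd_mul_right n q) X ∈ L → X ∈ L' := by
  obtain ⟨A, u, v, huv, rfl⟩ := hL
  obtain ⟨u', v', hgcd, hu', hv', hvq⟩ := exists_coprime_lift hq huv
  obtain ⟨B, hB⟩ := ZMod.castHom_surjective (dvd_mul_right n q) A.2
  refine ⟨_, ⟨(A.1, B), u', v', hgcd, rfl⟩, ?_⟩
  rintro X ⟨k, hk⟩
  simp only [torusProj, Prod.ext_iff] at hk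
  obtain ⟨k', hk', hk'q⟩ := ZMod.exists_natCast_eq_of_coprime hq (k : ZMod (m * n))
    (ZMod.castHom (dvd_mul_left q n) (ZMod q) (X.2 - B))
  have hreduce : ∀ {d : ℕ}, d ∣ m * n → ∀ {z w : ℤ}, (z : ZMod (m * n)) = w → (z : ZMod d) = w := by
    intro d hd z w h
    simpa using congrArg (ZMod.castHom hd (ZMod d)) h
  have hk'm := hreduce (dvd_mul_right m n) (z := k') (by simpa using hk')
  have hu'm := hreduce (dvd_mul_right m n) hu'
  have hk'n := hreduce (dvd_mul_left n m) (z := k') (by simpa using hk')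
  have hv'n := hreduce (dvd_mul_left n m) hv'
  push_cast at hk'm hk'n hk ⊢
  refine ⟨k', Prod.ext ?_ ?_⟩ <;> simp only [Int.cast_natCast]
  · rw [hk.1, hk'm, hu'm]
  · apply ZMod.eq_of_castHom_eq_of_coprime (Nat.Coprime.coprime_mul_left hq)
    · simp only [map_add, map_mul, map_natCast, map_intCast, hk.2, hB, hk'n, hv'n]
    · simp only [map_add, map_mul, map_natCast, map_intCast, hk'q, hvq, map_sub]
      ring

theorem torusCollinear_of_map_torusProj {m n q : ℕ} [NeZero m] [NeZero n] [NeZero q]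
    (hq : (m * n).Coprime q) {P Q R : ZMod m × ZMod (n * q)}
    (h : torusCollinear m n (torusProj m (dvd_mul_right n q) P) (torusProj m (dvd_mul_right n q) Q)
      (torusProj m (dvd_mul_right n q) R)) :
    torusCollinear m (n * q) P Q R := by
  obtain ⟨L, hL, hP, hQ, hR⟩ := h
  obtain ⟨L', hL', hsub⟩ := exists_torusLine_forall_torusProj_mem hq hL
  exact ⟨L', hL', hsub P hP, hsub Q hQ, hsub R hR⟩

theorem noThreeInLine_of_card_le_two {m n : ℕ} {S : Finset (ZMod m × ZMod n)} (h : S.card ≤ 2) :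
    noThreeInLine m n S := by
  intro P hP Q hQ R hR hPQ hPR hQR _
  have h3 : ({P, Q, R} : Finset _).card = 3 := Finset.card_eq_three.2 ⟨P, Q, R, hPQ, hPR, hQR, rfl⟩
  have hsub : ({P, Q, R} : Finset _) ⊆ S := by
    simp only [Finset.insert_subset_iff, Finset.singleton_subset_iff]
    exact ⟨hP, hQ, hR⟩
  have := Finset.card_le_card hsub
  omega

theorem tau_le_of_forall {m n B : ℕ}
    (h : ∀ S : Finset (ZMod m × ZMod n), noThreeInLine m n S → S.card ≤ B) : tau m n ≤ B :=
  csSup_le ⟨0, ∅, noThreeInLine_of_card_le_two (by simp), rfl⟩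
    (by rintro _ ⟨S, hS, rfl⟩; exact h S hS)

theorem card_le_tau {m n : ℕ} [NeZero m] [NeZero n] {S : Finset (ZMod m × ZMod n)}
    (hS : noThreeInLine m n S) : S.card ≤ tau m n :=
  le_csSup ⟨_, by rintro _ ⟨T, -, rfl⟩; exact Finset.card_le_univ T⟩ ⟨S, hS, rfl⟩

theorem two_le_tau {m n : ℕ} [NeZero n] (hm : 1 < m) : 2 ≤ tau m n := by
  have : Fact (1 < m) := ⟨hm⟩
  have : NeZero m := ⟨by omega⟩
  have hne : ((0 : ZMod m), (0 : ZMod n)) ≠ (1, 0) := by simp [Prod.ext_iff]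
  simpa [Finset.card_pair hne] using
    card_le_tau (noThreeInLine_of_card_le_two (Finset.card_pair hne).le)

theorem card_le_tau_of_injOn {m n m' n' : ℕ} [NeZero m'] [NeZero n']
    {f : ZMod m × ZMod n → ZMod m' × ZMod n'} {S : Finset (ZMod m × ZMod n)}
    (hS : noThreeInLine m n S) (hf : Set.InjOn f S)
    (hcol : ∀ P Q R, torusCollinear m' n' (f P) (f Q) (f R) → torusCollinear m n P Q R) :
    S.card ≤ tau m' n' := by
  classical
  rw [← Finset.card_image_of_injOn hf]
  refine card_le_tau ?_
  simp only [Finset.coe_image]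
  rintro _ ⟨P, hP, rfl⟩ _ ⟨Q, hQ, rfl⟩ _ ⟨R, hR, rfl⟩ hPQ hPR hQR h
  exact hS P hP Q hQ R hR (ne_of_apply_ne f hPQ) (ne_of_apply_ne f hPR) (ne_of_apply_ne f hQR)
    (hcol P Q R h)

theorem tau_mono {m n d : ℕ} [NeZero m] [NeZero n] (hd : d ∣ n) : tau m d ≤ tau m n := by
  have hsurj : Function.Surjective (torusProj m hd) := fun Y =>
    let ⟨y, hy⟩ := ZMod.castHom_surjective hd Y.2
    ⟨(Y.1, y), by simp [torusProj, hy]⟩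
  have hsec := Function.rightInverse_surjInv hsurj
  refine tau_le_of_forall fun S hS => card_le_tau_of_injOn hS hsec.injective.injOn ?_
  intro P Q R h
  simpa only [hsec _] using h.map_torusProj hd

theorem tau_le_two_mul_gcd (m n : ℕ) [NeZero m] [NeZero n] : tau m n ≤ 2 * m.gcd n := by
  classical
  have : NeZero (m.gcd n) := ⟨Nat.gcd_ne_zero_left (NeZero.ne m)⟩
  refine tau_le_of_forall fun S hS => ?_
  have hfiber : ∀ r ∈ S.image (diagResidue m n),
      (S.filter (diagResidue m n · = r)).card ≤ 2 := by
    intro r _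
    by_contra! h
    obtain ⟨P, hP, Q, hQ, R, hR, hPQ, hPR, hQR⟩ := Finset.two_lt_card.1 h
    simp only [Finset.mem_filter] at hP hQ hR
    exact hS P hP.1 Q hQ.1 R hR.1 hPQ hPR hQR
      (torusCollinear_of_diagResidue_eq (hQ.2.trans hP.2.symm) (hR.2.trans hP.2.symm))
  calc S.card ≤ 2 * (S.image (diagResidue m n)).card := Finset.card_le_mul_card_image _ 2 hfiber
    _ ≤ 2 * m.gcd n := by
      simpa using Nat.mul_le_mul_left 2 (Finset.card_le_univ (S.image (diagResidue m n)))

theorem tau_mul_of_coprime {m n q : ℕ} [NeZero n] (hm : 1 < m) (hq : (m * n).Coprime q) :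
    tau m (n * q) = tau m n := by
  have : NeZero m := ⟨by omega⟩
  have : NeZero q := ⟨by
    rintro rfl
    have := Nat.eq_one_of_mul_eq_one_right ((Nat.coprime_zero_right _).1 hq)
    omega⟩
  refine le_antisymm (tau_le_of_forall fun S hS => ?_) (tau_mono (dvd_mul_right n q))
  by_cases hS2 : S.card ≤ 2
  · exact hS2.trans (two_le_tau hm)
  refine card_le_tau_of_injOn (f := torusProj m (dvd_mul_right n q)) hS ?_
    fun P Q R => torusCollinear_of_map_torusProj hq
  intro x hx y hy hxy
  by_contra hne
  obtain ⟨z, hz⟩ : (S \ {x, y}).Nonempty := by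
    have := Finset.card_le_card_sdiff_add_card (s := S) (t := {x, y})
    have := Finset.card_le_two (a := x) (b := y)
    rw [← Finset.card_pos]
    omega
  simp only [Finset.mem_sdiff, Finset.mem_insert, Finset.mem_singleton, not_or] at hz
  obtain ⟨L, hL, hxL, hzL⟩ := exists_torusLine_mem_mem (torusProj m (dvd_mul_right n q) x)
    (torusProj m (dvd_mul_right n q) z)
  exact hS x hx y hy z hz.1 hne (Ne.symm hz.2.1) (Ne.symm hz.2.2)
    (torusCollinear_of_map_torusProj hq ⟨L, hL, hxL, hxy ▸ hxL, hzL⟩)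

theorem tau_eq_two_mul_of_dvd {m d n : ℕ} [NeZero m] [NeZero n] (hd : tau m d = 2 * m)
    (hdn : d ∣ n) : tau m n = 2 * m := by
  have : NeZero d := ⟨by rintro rfl; exact NeZero.ne n (Nat.eq_zero_of_zero_dvd hdn)⟩
  refine le_antisymm ((tau_le_two_mul_gcd m n).trans ?_) (hd ▸ tau_mono hdn)
  exact Nat.mul_le_mul_left 2 (Nat.gcd_le_left n (Nat.pos_of_ne_zero (NeZero.ne m)))

theorem dvd_of_tau_eq_two_mul {m n : ℕ} [NeZero m] [NeZero n] (h : tau m n = 2 * m) : m ∣ n := by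
  have hle := tau_le_two_mul_gcd m n
  have hge := Nat.gcd_le_left n (Nat.pos_of_ne_zero (NeZero.ne m))
  exact Nat.gcd_eq_left_iff_dvd.1 (by omega)

theorem tau_prime_pow_mul_of_not_dvd {p a q : ℕ} (hp : p.Prime) (ha : 0 < a) (c : ℕ)
    (hq : ¬ p ∣ q) : tau (p ^ a) (p ^ c * q) = tau (p ^ a) (p ^ c) :=
  have : NeZero (p ^ c) := ⟨pow_ne_zero _ hp.ne_zero⟩
  tau_mul_of_coprime (Nat.one_lt_pow ha.ne' hp.one_lt)
    (by rw [← pow_add]; exact ((hp.coprime_iff_not_dvd).2 hq).pow_left _)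

theorem tau_add_prime_pow {p a b n : ℕ} (hp : p.Prime) (ha : 0 < a)
    (hb : tau (p ^ a) (p ^ b) = 2 * p ^ a) (hn : n ≠ 0) :
    tau (p ^ a) (n + p ^ b) = tau (p ^ a) n := by
  have : NeZero (p ^ a) := ⟨pow_ne_zero _ hp.ne_zero⟩
  obtain ⟨c, q, hq, rfl⟩ := Nat.exists_eq_pow_mul_and_not_dvd hn p hp.ne_one
  rcases le_or_gt b c with hbc | hcb
  · have : NeZero (p ^ c * q) := ⟨hn⟩
    have : NeZero (p ^ c * q + p ^ b) := ⟨by omega⟩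
    have hdvd : p ^ b ∣ p ^ c * q := (pow_dvd_pow p hbc).mul_right q
    rw [tau_eq_two_mul_of_dvd hb hdvd, tau_eq_two_mul_of_dvd hb (dvd_add hdvd dvd_rfl)]
  · have hsum : p ^ c * q + p ^ b = p ^ c * (q + p ^ (b - c)) := by
      rw [mul_add, ← pow_add, Nat.add_sub_cancel' hcb.le]
    have hq' : ¬ p ∣ q + p ^ (b - c) :=
      fun h => hq ((Nat.dvd_add_left (dvd_pow_self p (by omega))).1 h)
    rw [hsum, tau_prime_pow_mul_of_not_dvd hp ha c hq, tau_prime_pow_mul_of_not_dvd hp ha c hq']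

theorem stmt8 (p a m : ℕ) (hp : p.Prime) (ha : 0 < a)
    (hm : IsLeast {x : ℕ | 0 < x ∧ tau (p ^ a) x = 2 * p ^ a} m) :
    ∃ b : ℕ, a ≤ b ∧ m = p ^ b ∧ ∀ n : ℕ, 1 ≤ n → tau (p ^ a) (n + m) = tau (p ^ a) n := by
  obtain ⟨⟨hm0, hmτ⟩, hmin⟩ := hm
  have : NeZero (p ^ a) := ⟨pow_ne_zero _ hp.ne_zero⟩
  obtain ⟨b, q, hq, rfl⟩ := Nat.exists_eq_pow_mul_and_not_dvd hm0.ne' p hp.ne_one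
  have hτb : tau (p ^ a) (p ^ b) = 2 * p ^ a := by
    rwa [tau_prime_pow_mul_of_not_dvd hp ha b hq] at hmτ
  have hq1 : q = 1 := by
    have hle : p ^ b * q ≤ p ^ b * 1 := by simpa using hmin ⟨pow_pos hp.pos b, hτb⟩
    have := Nat.pos_of_ne_zero (right_ne_zero_of_mul hm0.ne')
    have := Nat.le_of_mul_le_mul_left hle (pow_pos hp.pos b)
    omega
  subst hq1
  have : NeZero (p ^ b) := ⟨pow_ne_zero _ hp.ne_zero⟩
  refine ⟨b, ?_, mul_one _, fun n hn => ?_⟩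
  · exact (Nat.pow_dvd_pow_iff_le_right hp.one_lt).1 (dvd_of_tau_eq_two_mul hτb)
  · rw [mul_one]
    exact tau_add_prime_pow hp ha hτb (by omega)
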